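/- arXiv:1301.6584 — 5 statements merged into one kernel-verified Lean document; each statement's English description precedes it below -/
import Mathlib

section
/- Let Z be a free additive subgroup of ℝ² of rank at least 3 such that every corank-1 subgroup of Z spans ℝ² as a real vector space. Then Z is dense in ℝ². -/
/-!
A discrete subgroup of `ℝ²` has rank at most `2`, so `Z` contains arbitrarily short nonzero
vectors; their directions accumulate at some `u`, and the closure of `Z` contains the line `ℝ u`.
Let `φ` be a linear functional with kernel `ℝ u`. If `φ(Z)` is dense in `ℝ`, then `Z` is dense.
Otherwise `φ(Z)` is cyclic, so `φ` restricted to `Z` factors through a nonzero homomorphism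
`f : Z → ℤ` (if `φ` vanishes on `Z`, any nonzero `f` will do, and one exists as `Z` is free).
Then `ker f` is a corank-one subgroup of `Z` inside `ker φ`, so it does not span `ℝ²`.
-/

open Module Filter Topology

theorem AddSubgroup.rank_le_finrank_of_discreteTopology {E : Type*} [NormedAddCommGroup E]
    [NormedSpace ℝ E] [FiniteDimensional ℝ E] (Z : AddSubgroup E) [hZ : DiscreteTopology Z] :
    Module.rank ℤ Z ≤ finrank ℝ E := by
  have hspan : Submodule.span ℤ (Z : Set E) = Z.toIntSubmodule :=
    Submodule.span_eq Z.toIntSubmodule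
  have hdisc : DiscreteTopology (Submodule.span ℤ (Z : Set E)) := by rw [hspan]; exact hZ
  have hfinrank : finrank ℤ Z.toIntSubmodule ≤ finrank ℝ E := by
    rw [← hspan, ← Set.finrank, ← Real.finrank_eq_int_finrank_of_discrete hdisc]
    exact Submodule.finrank_le _
  have : DiscreteTopology Z.toIntSubmodule := hZ
  change Module.rank ℤ Z.toIntSubmodule ≤ _
  rw [← Module.finrank_eq_rank]
  exact_mod_cast hfinrank

theorem AddSubgroup.exists_ne_zero_norm_lt_of_not_discreteTopology {E : Type*}
    [NormedAddCommGroup E] (Z : AddSubgroup E) (hZ : ¬ DiscreteTopology Z) {ε : ℝ} (hε : 0 < ε) :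
    ∃ x ∈ Z, x ≠ 0 ∧ ‖x‖ < ε := by
  contrapose! hZ
  rw [discreteTopology_iff_isOpen_singleton_zero, Metric.isOpen_iff]
  rintro _ rfl
  refine ⟨ε, hε, fun y hy => ?_⟩
  rw [Metric.mem_ball, dist_zero_right] at hy
  by_contra hy0
  exact (hZ y y.2 (by simpa using hy0)).not_gt hy

theorem AddSubgroup.exists_ne_zero_span_le_topologicalClosure {E : Type*} [NormedAddCommGroup E]
    [NormedSpace ℝ E] [ProperSpace E] (Z : AddSubgroup E)
    (hZ : ∀ ε > 0, ∃ x ∈ Z, x ≠ 0 ∧ ‖x‖ < ε) :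
    ∃ v ≠ 0, (ℝ ∙ v).toAddSubgroup ≤ Z.topologicalClosure := by
  choose x hxZ hx0 hxε using fun n : ℕ => hZ (1 / (n + 1)) Nat.one_div_pos_of_nat
  have hx : Tendsto (fun n => ‖x n‖) atTop (𝓝 0) :=
    squeeze_zero (fun _ => norm_nonneg _) (fun n => (hxε n).le)
      tendsto_one_div_add_atTop_nhds_zero_nat
  have hunit : ∀ n, ‖x n‖⁻¹ • x n ∈ Metric.sphere (0 : E) 1 := fun n => by
    simp [norm_smul, hx0 n]
  obtain ⟨v, hv, ψ, hψ, hconv⟩ := (isCompact_sphere (0 : E) 1).tendsto_subseq hunit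
  refine ⟨v, ne_zero_of_mem_unit_sphere ⟨v, hv⟩, fun y hy => ?_⟩
  obtain ⟨t, rfl⟩ := Submodule.mem_span_singleton.mp hy
  have hnear : ∀ n, ‖(⌊t / ‖x n‖⌋ : ℤ) • x n - t • (‖x n‖⁻¹ • x n)‖ ≤ ‖x n‖ := fun n => by
    rw [← Int.cast_smul_eq_zsmul ℝ, smul_smul, ← sub_smul, norm_smul, ← div_eq_mul_inv]
    calc ‖(⌊t / ‖x n‖⌋ : ℝ) - t / ‖x n‖‖ * ‖x n‖ ≤ 1 * ‖x n‖ := by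
          gcongr
          rw [Real.norm_eq_abs, abs_sub_comm, abs_of_nonneg (Int.fract_nonneg _)]
          exact (Int.fract_lt_one _).le
      _ = ‖x n‖ := one_mul _
  have hdiff : Tendsto (fun k => (⌊t / ‖x (ψ k)‖⌋ : ℤ) • x (ψ k) - t • (‖x (ψ k)‖⁻¹ • x (ψ k)))
      atTop (𝓝 0) :=
    squeeze_zero_norm (fun k => hnear (ψ k)) (hx.comp hψ.tendsto_atTop)
  exact mem_closure_of_tendsto (by simpa using (hconv.const_smul t).add hdiff)
    (Eventually.of_forall fun k => Z.zsmul_mem (hxZ (ψ k)) _)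

theorem AddSubgroup.dense_of_ker_le_topologicalClosure {E : Type*} [AddCommGroup E] [Module ℝ E]
    [TopologicalSpace E] [IsTopologicalAddGroup E] [ContinuousSMul ℝ E] (Z : AddSubgroup E)
    (φ : E →ₗ[ℝ] ℝ) {w : E} (hw : φ w = 1)
    (hker : (LinearMap.ker φ).toAddSubgroup ≤ Z.topologicalClosure) (hdense : Dense (φ '' Z)) :
    Dense (Z : Set E) := by
  have hproj : ∀ y, y - φ y • w ∈ Z.topologicalClosure := fun y => hker (by simp [hw])
  have hline : ∀ s : ℝ, s • w ∈ Z.topologicalClosure := by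
    have hclosed : IsClosed {s : ℝ | s • w ∈ Z.topologicalClosure} :=
      Z.isClosed_topologicalClosure.preimage (continuous_id.smul continuous_const)
    refine fun s => closure_minimal ?_ hclosed (hdense s)
    rintro _ ⟨z, hz, rfl⟩
    simpa using sub_mem (Z.le_topologicalClosure hz) (hproj z)
  intro y
  have hy := add_mem (hproj y) (hline (φ y))
  rwa [sub_add_cancel] at hy

theorem Submodule.exists_ker_eq_of_finrank_quotient_eq_one {K E : Type*} [Field K]
    [AddCommGroup E] [Module K E] (V : Submodule K E) (hV : finrank K (E ⧸ V) = 1) :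
    ∃ φ : E →ₗ[K] K, LinearMap.ker φ = V ∧ ∃ w, φ w = 1 := by
  have : Module.Finite K (E ⧸ V) := Module.finite_of_finrank_eq_succ hV
  obtain ⟨ψ⟩ : Nonempty ((E ⧸ V) ≃ₗ[K] K) :=
    FiniteDimensional.nonempty_linearEquiv_of_finrank_eq (by rw [hV, finrank_self])
  obtain ⟨w, hw⟩ := V.mkQ_surjective (ψ.symm 1)
  refine ⟨ψ.toLinearMap ∘ₗ V.mkQ, ?_, w, by simp [hw]⟩
  rw [LinearMap.ker_comp, LinearEquiv.ker, Submodule.comap_bot, Submodule.ker_mkQ]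

theorem AddSubgroup.rank_eq_one_of_ne_bot (S : AddSubgroup ℤ) (hS : S ≠ ⊥) :
    Module.rank ℤ S = 1 := by
  have : Nontrivial S := (AddSubgroup.nontrivial_iff_ne_bot S).mpr hS
  refine le_antisymm ?_ (Cardinal.one_le_iff_pos.mpr rank_pos)
  calc Module.rank ℤ S ≤ Module.rank ℤ ℤ :=
        LinearMap.rank_le_of_injective S.subtype.toIntLinearMap Subtype.coe_injective
    _ = 1 := rank_self ℤ

theorem AddMonoidHom.rank_quotient_ker_eq_one {G : Type*} [AddCommGroup G] (f : G →+ ℤ)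
    (hf : f ≠ 0) : Module.rank ℤ (G ⧸ f.ker) = 1 := by
  have h := (QuotientAddGroup.quotientKerEquivRange f).toIntLinearEquiv.lift_rank_eq
  rwa [f.range.rank_eq_one_of_ne_bot (mt f.range_eq_bot_iff.mp hf), Cardinal.lift_one,
    Cardinal.lift_eq_one] at h

theorem AddSubgroup.rank_quotient_map_ker_eq_one {A : Type*} [AddCommGroup A] (Z : AddSubgroup A)
    (f : Z →+ ℤ) (hf : f ≠ 0) :
    Module.rank ℤ (Z ⧸ (f.ker.map Z.subtype).addSubgroupOf Z) = 1 := by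
  rw [AddSubgroup.addSubgroupOf, AddSubgroup.comap_map_eq_self_of_injective Z.subtype_injective]
  exact f.rank_quotient_ker_eq_one hf

theorem AddMonoidHom.exists_int_ne_zero_ker_le {G : Type*} [AddCommGroup G] [Module.Free ℤ G]
    [Nontrivial G] (φ : G →+ ℝ) {a : ℝ} (ha : ∀ g, φ g ∈ AddSubgroup.zmultiples a) :
    ∃ f : G →+ ℤ, f ≠ 0 ∧ f.ker ≤ φ.ker := by
  by_cases hφ : φ = 0
  · obtain ⟨x, hx⟩ := exists_ne (0 : G)
    obtain ⟨f, hf⟩ := Module.Projective.exists_dual_ne_zero ℤ hx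
    refine ⟨f.toAddMonoidHom, fun h => hf ?_, by simp [hφ]⟩
    simp [← LinearMap.toAddMonoidHom_coe, h]
  · choose n hn using fun g => AddSubgroup.mem_zmultiples_iff.mp (ha g)
    have ha0 : a ≠ 0 := by
      rintro rfl
      exact hφ (AddMonoidHom.ext fun g => by simp [← hn g])
    have hinj : Function.Injective fun k : ℤ => k • a := smul_left_injective ℤ ha0
    let f : G →+ ℤ := AddMonoidHom.mk' n fun x y => hinj <| by
      simp only [add_zsmul, hn, map_add]
    refine ⟨f, fun hf => hφ (AddMonoidHom.ext fun g => ?_), fun g hg => ?_⟩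
    · simp [← hn g, show n g = 0 from DFunLike.congr_fun hf g]
    · simp [← hn g, show n g = 0 from hg]

/-- If `Z` is a free additive subgroup of `ℝ²` of rank at least `3` such that every
corank-`1` subgroup of `Z` spans `ℝ²` as a real vector space, then `Z` is dense in `ℝ²`. -/
theorem stmt_0 (Z : AddSubgroup (Fin 2 → ℝ))
    (hfree : Module.Free ℤ Z)
    (hrank : 3 ≤ Module.rank ℤ Z)
    (hcorank : ∀ H : AddSubgroup (Fin 2 → ℝ), H ≤ Z →
      Module.rank ℤ (Z ⧸ H.addSubgroupOf Z) = 1 →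
      Submodule.span ℝ (H : Set (Fin 2 → ℝ)) = ⊤) :
    Dense (Z : Set (Fin 2 → ℝ)) := by
  have : Nontrivial Z := rank_pos_iff_nontrivial.mp (lt_of_lt_of_le (by norm_num) hrank)
  have hnd : ¬ DiscreteTopology Z := fun _ => by
    have h := hrank.trans Z.rank_le_finrank_of_discreteTopology
    rw [finrank_fin_fun] at h
    norm_num at h
  obtain ⟨u, hu, hline⟩ := Z.exists_ne_zero_span_le_topologicalClosure
    fun _ hε => Z.exists_ne_zero_norm_lt_of_not_discreteTopology hnd hε
  obtain ⟨φ, hker, w, hw⟩ := (ℝ ∙ u).exists_ker_eq_of_finrank_quotient_eq_one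
    (by rw [Submodule.finrank_quotient, finrank_span_singleton hu, finrank_fin_fun])
  rcases (Z.map φ.toAddMonoidHom).dense_or_cyclic with hdense | ⟨a, ha⟩
  · exact Z.dense_of_ker_le_topologicalClosure φ hw (hker ▸ hline) hdense
  · rw [← AddSubgroup.zmultiples_eq_closure] at ha
    obtain ⟨f, hf, hfφ⟩ := (φ.toAddMonoidHom.comp Z.subtype).exists_int_ne_zero_ker_le
      fun z => ha ▸ AddSubgroup.mem_map_of_mem _ z.2
    have hspan := hcorank _ (AddSubgroup.map_subtype_le _) (Z.rank_quotient_map_ker_eq_one f hf)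
    have hφ : LinearMap.ker φ = ⊤ := by
      rw [eq_top_iff, ← hspan, Submodule.span_le]
      rintro _ ⟨z, hz, rfl⟩
      exact hfφ hz
    simp [LinearMap.ker_eq_top.mp hφ] at hw
end

section
/- Let L_{n,d} be the rank-2 lattice with Gram matrix (2n-2)/d² · [[1,0],[0,0]], with n ≥ 2, d ≥ 1 and d² dividing n-1. Two primitive vectors (d, y) and (d, z) of self-intersection 2n-2 lie in the same orbit of the isometry group O(L_{n,d}) if and only if y ≡ z (mod d) or y ≡ -z (mod d). -/
/-!
Write `C = 2(n-1)/d² ≠ 0`. Pairing `f v` with `f (d, y) = (d, z)` in the form `C·x·x'` shows that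
an isometry mapping `(d, y)` to `(d, z)` fixes the first coordinate, so it is a shear
`(x, w) ↦ (x, c x + u w)` with `u` a unit; conversely every such shear is an isometry. Hence the
orbit condition is `z = c d + u y` for some `c` and `u = ±1`.
-/

namespace LatticeOrbit

variable {R : Type*} [CommRing R]

def shear (c : R) (u : Rˣ) : (R × R) ≃ₗ[R] (R × R) where
  toFun v := (v.1, c * v.1 + u * v.2)
  invFun v := (v.1, ↑u⁻¹ * (v.2 - c * v.1))
  map_add' v w := by ext <;> simp only [Prod.fst_add, Prod.snd_add]; ring
  map_smul' r v := by
    ext <;> simp only [Prod.smul_fst, Prod.smul_snd, smul_eq_mul, RingHom.id_apply]; ring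
  left_inv v := by ext <;> simp
  right_inv v := by ext <;> simp

@[simp]
lemma shear_apply (c : R) (u : Rˣ) (v : R × R) : shear c u v = (v.1, c * v.1 + u * v.2) := rfl

lemma map_eq_fst_smul_add_snd_smul {M : Type*} [AddCommGroup M] [Module R M]
    (f : (R × R) →ₗ[R] M) (v : R × R) : f v = v.1 • f (1, 0) + v.2 • f (0, 1) := by
  rw [← map_smul, ← map_smul, ← map_add]
  congr 1
  ext <;> simp

lemma eq_shear_of_fst_map_eq (f : (R × R) ≃ₗ[R] (R × R)) (hf : ∀ v, (f v).1 = v.1) :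
    ∃ (c : R) (u : Rˣ), f = shear c u := by
  have hsnd (v : R × R) : (f v).2 = v.1 * (f (1, 0)).2 + v.2 * (f (0, 1)).2 := by
    simpa using congrArg Prod.snd (map_eq_fst_smul_add_snd_smul f.toLinearMap v)
  obtain ⟨u, hu⟩ : IsUnit (f (0, 1)).2 := by
    set p := f.symm (0, 1)
    have hfp : f p = (0, 1) := f.apply_symm_apply _
    have hp₁ : p.1 = 0 := by simpa [hfp] using (hf p).symm
    refine IsUnit.of_mul_eq_one_right p.2 ?_
    simpa [hfp, hp₁] using (hsnd p).symm
  refine ⟨(f (1, 0)).2, u, LinearEquiv.ext fun v => Prod.ext (hf v) ?_⟩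
  rw [hsnd, ← hu, shear_apply, mul_comm v.1, mul_comm v.2]

lemma fst_eq_of_isometry [IsDomain R] {C d y z : R} (hC : C ≠ 0) (hd : d ≠ 0)
    (f : R × R → R × R) (hf : ∀ v w, C * (f v).1 * (f w).1 = C * v.1 * w.1)
    (hfd : f (d, y) = (d, z)) (v : R × R) : (f v).1 = v.1 := by
  have h := hf v (d, y)
  rw [hfd] at h
  exact mul_left_cancel₀ hC (mul_right_cancel₀ hd h)

theorem exists_isometry_map_eq_iff [IsDomain R] {C d y z : R} (hC : C ≠ 0) (hd : d ≠ 0) :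
    (∃ f : (R × R) ≃ₗ[R] (R × R),
        (∀ v w, C * (f v).1 * (f w).1 = C * v.1 * w.1) ∧ f (d, y) = (d, z)) ↔
      ∃ (c : R) (u : Rˣ), z = c * d + u * y := by
  constructor
  · rintro ⟨f, hf, hfd⟩
    obtain ⟨c, u, rfl⟩ := eq_shear_of_fst_map_eq f (fst_eq_of_isometry hC hd f hf hfd)
    exact ⟨c, u, (congrArg Prod.snd hfd).symm⟩
  · rintro ⟨c, u, rfl⟩
    exact ⟨shear c u, fun v w => rfl, rfl⟩

end LatticeOrbit

lemma Int.exists_mul_add_unit_mul_iff {d y z : ℤ} :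
    (∃ (c : ℤ) (u : ℤˣ), z = c * d + u * y) ↔ d ∣ y - z ∨ d ∣ y + z := by
  constructor
  · rintro ⟨c, u, rfl⟩
    rcases Int.units_eq_one_or u with rfl | rfl
    · exact Or.inl ⟨-c, by push_cast; ring⟩
    · exact Or.inr ⟨c, by push_cast; ring⟩
  · rintro (⟨k, hk⟩ | ⟨k, hk⟩)
    · exact ⟨-k, 1, by push_cast; linear_combination -hk⟩
    · exact ⟨k, -1, by push_cast; linear_combination hk⟩

theorem stmt_4_general (n d : ℤ) (hn : 2 ≤ n) (hdvd : d ^ 2 ∣ n - 1)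
    (y z : ℤ) :
    (∃ f : (ℤ × ℤ) ≃ₗ[ℤ] (ℤ × ℤ),
        (∀ v w : ℤ × ℤ,
          (2 * (n - 1) / d ^ 2) * (f v).1 * (f w).1 = (2 * (n - 1) / d ^ 2) * v.1 * w.1) ∧
        f (d, y) = (d, z)) ↔
      (d ∣ y - z ∨ d ∣ y + z) := by
  have hd : d ≠ 0 := by
    rintro rfl
    rw [zero_pow two_ne_zero, zero_dvd_iff] at hdvd
    omega
  have hC : 2 * (n - 1) / d ^ 2 ≠ 0 := by
    intro h
    have := Int.ediv_mul_cancel (dvd_mul_of_dvd_right hdvd 2)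
    rw [h, zero_mul] at this
    omega
  rw [LatticeOrbit.exists_isometry_map_eq_iff hC hd, Int.exists_mul_add_unit_mul_iff]

/-- In the lattice `L_{n,d} = ℤ²` with bilinear form
`B((x,y),(x',y')) = ((2n-2)/d²)·x·x'` (`n ≥ 2`, `d ≥ 1`, `d² ∣ n-1`), two primitive vectors
`(d, y)` and `(d, z)` of self-intersection `2n-2` lie in the same orbit of the isometry
group if and only if `y ≡ z (mod d)` or `y ≡ -z (mod d)`. -/
theorem stmt_4 (n d : ℤ) (hn : 2 ≤ n) (hd : 1 ≤ d) (hdvd : d ^ 2 ∣ n - 1)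
    (y z : ℤ) (hy : IsCoprime d y) (hz : IsCoprime d z) :
    (∃ f : (ℤ × ℤ) ≃ₗ[ℤ] (ℤ × ℤ),
        (∀ v w : ℤ × ℤ,
          (2 * (n - 1) / d ^ 2) * (f v).1 * (f w).1 = (2 * (n - 1) / d ^ 2) * v.1 * w.1) ∧
        f (d, y) = (d, z)) ↔
      (d ∣ y - z ∨ d ∣ y + z) :=
  stmt_4_general n d hn hdvd y z
end

section
/- Let Λ̃ be an even lattice, β primitive isotropic, γ ∈ Λ̃ with (γ,β) = -1, (γ,γ) = 0, and v with (v,β)=0. Suppose f is an isometry of Λ̃ fixing β and v, inducing the identity on β^⊥/ℤβ. Then there exists z orthogonal to β and v such that f = g̃_z, namely z is determined by f(γ) ≡ γ + z (mod ℤβ). -/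
/-- The map `g̃_z(x) = x - (x,β)z + [(x,z) - ½(x,β)(z,z)]β` on an even lattice. -/
def transvection {Λ : Type*} [AddCommGroup Λ] [Module ℤ Λ]
    (B : Λ →ₗ[ℤ] Λ →ₗ[ℤ] ℤ) (β z x : Λ) : Λ :=
  x - (B x β) • z + (B x z - B x β * (B z z / 2)) • β

/-- Let `Λ̃` be an even lattice, `β` primitive isotropic, `γ` with `(γ,β) = -1`,
`(γ,γ) = 0`, and `v` with `(v,β) = 0`.  If `f` is an isometry of `Λ̃` fixing `β` and `v`
and inducing the identity on `β^⊥/ℤβ`, then there exists `z` orthogonal to `β` and `v`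
such that `f = g̃_z`; `z` is determined by `f(γ) ≡ γ + z (mod ℤβ)`. -/
theorem stmt_12 (Λ : Type*) [AddCommGroup Λ] [Module ℤ Λ]
    [Module.Free ℤ Λ] [Module.Finite ℤ Λ]
    (B : Λ →ₗ[ℤ] Λ →ₗ[ℤ] ℤ) (hsymm : ∀ x y, B x y = B y x)
    (heven : ∀ x, Even (B x x))
    (β γ v : Λ) (hβ : B β β = 0)
    (hβprim : ∀ (k : ℤ) (y : Λ), β = k • y → IsUnit k)
    (hγβ : B γ β = -1) (hγ : B γ γ = 0) (hvβ : B v β = 0)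
    (f : Λ ≃ₗ[ℤ] Λ) (hfB : ∀ x y, B (f x) (f y) = B x y)
    (hfβ : f β = β) (hfv : f v = v)
    (hfid : ∀ x, B x β = 0 → f x - x ∈ Submodule.span ℤ {β}) :
    ∃ z : Λ, B z β = 0 ∧ B z v = 0 ∧
      f γ - (γ + z) ∈ Submodule.span ℤ {β} ∧
      ∀ x, f x = transvection B β z x := by
  obtain ⟨z, hz⟩ : ∃ z : Λ, z = f γ - γ := ⟨_, rfl⟩
  have hfγ : f γ = γ + z := by rw [hz]; abel
  have hzβ : B z β = 0 := by
    have h := hfB γ β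
    rw [hfβ, hfγ] at h
    simp only [map_add, LinearMap.add_apply] at h
    linarith
  have hzv : B z v = 0 := by
    have h := hfB γ v
    rw [hfv, hfγ] at h
    simp only [map_add, LinearMap.add_apply] at h
    linarith
  have hβz : B β z = 0 := by rw [hsymm]; exact hzβ
  have hβγ : B β γ = -1 := by rw [hsymm]; exact hγβ
  have hzz : 2 * B γ z + B z z = 0 := by
    have h := hfB γ γ
    rw [hfγ] at h
    simp only [map_add, LinearMap.add_apply] at h
    have hzγ : B z γ = B γ z := by rw [hsymm]
    rw [hγ, hzγ] at h
    linarith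
  have hez := heven z
  have hdiv : B z z / 2 = -(B γ z) := by omega
  have key : ∀ w, B w β = 0 → f w = w + (B w z) • β := by
    intro w hw
    obtain ⟨n, hn⟩ := Submodule.mem_span_singleton.mp (hfid w hw)
    have hfw := sub_eq_iff_eq_add'.mp hn.symm
    have h1 := hfB w γ
    rw [hfw, hfγ, hsymm] at h1
    simp only [map_add, map_smul, LinearMap.add_apply, smul_eq_mul, Int.cast_id] at h1
    rw [hγβ, hzβ, hsymm γ w, hsymm z w] at h1
    have hn' : n = B w z := by linarith
    rw [hfw, hn']
    congr 1
    exact int_smul_eq_zsmul _ _ _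
  refine ⟨z, hzβ, hzv, ?_, ?_⟩
  · have h0 : f γ - (γ + z) = 0 := by rw [hz]; abel
    rw [h0]; exact Submodule.zero_mem _
  · intro x
    have hwβ : B (x + (B x β) • γ) β = 0 := by
      rw [hsymm]
      simp only [map_add, map_zsmul, zsmul_eq_mul, Int.cast_id]
      rw [hsymm β x, hβγ]
      ring
    have hfx : f x = f (x + B x β • γ) - B x β • f γ := by
      conv_lhs => rw [show x = (x + B x β • γ) - B x β • γ from by abel]
      rw [map_sub, map_zsmul]
    rw [key _ hwβ, hfγ] at hfx
    have hwz : B (x + B x β • γ) z = B x z + B x β * B γ z := by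
      rw [hsymm]
      simp only [map_add, map_zsmul, zsmul_eq_mul, Int.cast_id]
      rw [hsymm z x, hsymm z γ]
    rw [hwz] at hfx
    rw [hfx, transvection, hdiv]
    have e2 : B x z - B x β * -(B γ z) = B x z + B x β * B γ z := by ring
    rw [e2]
    have dz : ∀ (n : ℤ) (a b : Λ), n • (a + b) = n • a + n • b := by
      intro n a b
      simp only [← int_smul_eq_zsmul (inferInstance : Module ℤ Λ)]
      exact smul_add n a b
    rw [dz]
    abel
end

section
/- Let Q be a lattice of signature (2, m) with m ≥ 1, and let ℓ ⊂ Q ⊗ ℂ be a period (a line with (ℓ,ℓ) = 0 and (ℓ,ℓ̄) > 0). If ℓ is non-special, i.e. (ℓ ⊕ ℓ̄) ∩ Q = 0, then for any nonzero t ∈ ℓ the image of the homomorphism Q → ℂ, z ↦ (t,z), is dense in ℂ. -/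
/-!
A subgroup of a finite-dimensional real vector space is dense unless some nonzero linear
functional takes only integer values on it. Indeed, let `V` be the largest subspace contained in
the closure `H` of the subgroup and `W` a complement of `V`. Then `H ∩ W` has no accumulation
point at `0` (a limit of directions of short vectors of `H ∩ W` would span a line in `H` outside
`V`), so it is a lattice in its span, and a coordinate functional of that lattice, composed with
the projection onto `W` along `V ⊆ H`, is integral on `H`.

For the subgroup `{(t, z) : z ∈ Q}` of `ℂ`, write such a functional as `w ↦ Re (c w)` with
`c ≠ 0`. Integrality on the values `(t, e_j)` says that the real vector
`x = Re (c t) = (c t + c̄ t̄) / 2 ∈ ℓ ⊕ ℓ̄` satisfies `x B ∈ ℤⁿ`, so `det B • x` is an integral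
vector of `ℓ ⊕ ℓ̄`, and non-speciality forces `x = 0`. Then `t̄ = -(c / c̄) t`, hence
`(t, t̄) = -(c / c̄) (t, t) = 0`, contradicting `(t, t̄) > 0`.
-/

open Filter Topology Matrix ComplexConjugate

section

variable {R M : Type*} [Semiring R] [AddCommGroup M] [Module R M]

def AddSubgroup.linealitySpace (H : AddSubgroup M) : Submodule R M where
  carrier := {v | ∀ r : R, r • v ∈ H}
  add_mem' hu hv r := by simpa only [smul_add] using H.add_mem (hu r) (hv r)
  zero_mem' r := by simpa only [smul_zero] using H.zero_mem
  smul_mem' c v hv r := by simpa only [smul_smul] using hv (r * c)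

theorem AddSubgroup.mem_linealitySpace {H : AddSubgroup M} {v : M} :
    v ∈ H.linealitySpace (R := R) ↔ ∀ r : R, r • v ∈ H := Iff.rfl

theorem AddSubgroup.mem_of_mem_linealitySpace {H : AddSubgroup M} {v : M}
    (hv : v ∈ H.linealitySpace (R := R)) : v ∈ H := by
  simpa only [one_smul] using hv 1

end

section

variable {E : Type*} [NormedAddCommGroup E] [NormedSpace ℝ E]

lemma norm_smul_sub_floor_zsmul_le (s : ℝ) (x : E) : ‖s • x - ⌊s⌋ • x‖ ≤ ‖x‖ := by
  rw [← Int.cast_smul_eq_zsmul ℝ, ← sub_smul, norm_smul, ← Int.fract, Real.norm_eq_abs,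
    abs_of_nonneg (Int.fract_nonneg s)]
  exact mul_le_of_le_one_left (norm_nonneg x) (Int.fract_lt_one s).le

variable [FiniteDimensional ℝ E]

theorem AddSubgroup.exists_smul_mem_of_accPt_zero {H : AddSubgroup E}
    (hH : IsClosed (H : Set E)) (h0 : AccPt (0 : E) (𝓟 H)) :
    ∃ u ≠ 0, ∀ r : ℝ, r • u ∈ H := by
  set F := 𝓝[≠] (0 : E) ⊓ 𝓟 H
  have : F.NeBot := h0
  have hF : ∀ᶠ h in F, h ∈ H ∧ h ≠ 0 :=
    eventually_inf_principal.2 <| eventually_mem_nhdsWithin.mono fun h hne hH => ⟨hH, hne⟩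
  obtain ⟨u, hu, hcl⟩ := (isCompact_sphere (0 : E) 1).exists_clusterPt
    (f := F.map fun h => ‖h‖⁻¹ • h) <| le_principal_iff.2 <| hF.mono fun h ⟨_, hne⟩ => by
      simp [norm_smul, hne]
  refine ⟨u, ne_zero_of_mem_unit_sphere ⟨u, hu⟩, fun r => hH.closure_subset_iff.2 le_rfl ?_⟩
  -- The multiples `⌊r / ‖h‖⌋ • h` of short `h ∈ H` pointing roughly along `u` approximate `r • u`.
  rw [Metric.mem_closure_iff]
  intro ε hε
  set δ := ε / 2 / (|r| + 1)
  have hshort : ∀ᶠ h in F, ‖h‖ < ε / 2 :=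
    Eventually.filter_mono (inf_le_left.trans nhdsWithin_le_nhds) <|
      Eventually.mono (Metric.ball_mem_nhds (0 : E) (half_pos hε)) fun h => mem_ball_zero_iff.1
  have hdir : ∃ᶠ h in F, ‖h‖⁻¹ • h ∈ Metric.ball u δ :=
    frequently_map.1 <| hcl.frequently <| Metric.ball_mem_nhds u (by positivity)
  obtain ⟨h, hdir, ⟨hH, -⟩, hsmall⟩ := (hdir.and_eventually (hF.and hshort)).exists
  refine ⟨⌊r / ‖h‖⌋ • h, H.zsmul_mem hH _, ?_⟩
  have hrδ : (|r| + 1) * δ = ε / 2 := mul_div_cancel₀ _ (by positivity)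
  calc dist (r • u) (⌊r / ‖h‖⌋ • h)
      ≤ ‖r • u - (r / ‖h‖) • h‖ + ‖(r / ‖h‖) • h - ⌊r / ‖h‖⌋ • h‖ :=
        by rw [dist_eq_norm]; exact norm_sub_le_norm_sub_add_norm_sub _ _ _
    _ < ε / 2 + ε / 2 := by
        gcongr ?_ + ?_
        · rw [div_eq_mul_inv, mul_smul, ← smul_sub, norm_smul, ← dist_eq_norm, dist_comm,
            Real.norm_eq_abs, ← hrδ]
          have := Metric.mem_ball.1 hdir
          nlinarith [abs_nonneg r, dist_nonneg (x := ‖h‖⁻¹ • h) (y := u)]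
        · exact (norm_smul_sub_floor_zsmul_le _ h).trans_lt hsmall
    _ = ε := add_halves ε

theorem AddSubgroup.exists_ne_zero_forall_mem_int_of_discreteTopology [Nontrivial E]
    (L : AddSubgroup E) [DiscreteTopology L] :
    ∃ f : E →ₗ[ℝ] ℝ, f ≠ 0 ∧ ∀ x ∈ L, ∃ n : ℤ, f x = n := by
  set L' := L.toIntSubmodule
  have : DiscreteTopology L' := inferInstanceAs (DiscreteTopology L)
  by_cases hspan : Submodule.span ℝ (L' : Set E) = ⊤
  · have : IsZLattice ℝ L' := ⟨hspan⟩
    let b := Module.Basis.ofZLatticeBasis ℝ L' (Module.Free.chooseBasis ℤ L')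
    obtain ⟨i⟩ := b.index_nonempty
    refine ⟨b.coord i, fun h => by simpa using LinearMap.congr_fun h (b i), fun x hx => ?_⟩
    change x ∈ L' at hx
    rw [← Module.Basis.ofZLatticeBasis_span ℝ L',
      Module.Basis.mem_span_iff_repr_mem] at hx
    obtain ⟨n, hn⟩ := hx i
    exact ⟨n, hn.symm⟩
  · obtain ⟨f, hf0, hker⟩ :=
      Submodule.exists_dual_map_eq_bot_of_lt_top (lt_top_iff_ne_top.2 hspan) inferInstance
    refine ⟨f, hf0, fun x hx => ⟨0, ?_⟩⟩
    have : f x ∈ (Submodule.span ℝ (L' : Set E)).map f := ⟨x, Submodule.subset_span hx, rfl⟩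
    simpa [hker] using this

theorem AddSubgroup.exists_ne_zero_forall_mem_int_of_not_dense {G : AddSubgroup E}
    (hG : ¬Dense (G : Set E)) : ∃ f : E →ₗ[ℝ] ℝ, f ≠ 0 ∧ ∀ x ∈ G, ∃ n : ℤ, f x = n := by
  set H := G.topologicalClosure
  set V : Submodule ℝ E := H.linealitySpace
  have hV : V ≠ ⊤ := fun hV => hG <| by
    rw [dense_iff_closure_eq, ← G.topologicalClosure_coe, Set.eq_univ_iff_forall]
    exact fun v => AddSubgroup.mem_of_mem_linealitySpace (hV ▸ Submodule.mem_top : v ∈ V)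
  obtain ⟨W, hVW⟩ := V.exists_isCompl
  have : Nontrivial W :=
    Submodule.nontrivial_iff_ne_bot.2 fun hW => hV (eq_top_of_isCompl_bot (hW ▸ hVW))
  set L : AddSubgroup W := H.comap W.subtype.toAddMonoidHom
  have : DiscreteTopology L := by
    refine discreteTopology_of_isOpen_singleton_zero <|
      (isOpen_singleton_iff_punctured_nhds _).2 <| nhds_ne_subtype_eq_bot_iff.2 <|
        not_neBot.1 fun hacc => ?_
    obtain ⟨u, hu, huL⟩ := L.exists_smul_mem_of_accPt_zero
      (G.isClosed_topologicalClosure.preimage continuous_subtype_val) hacc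
    have : (u : E) ∈ V ⊓ W := ⟨AddSubgroup.mem_linealitySpace.2 huL, u.2⟩
    exact hu (Subtype.ext ((Submodule.mem_bot ℝ).1 (hVW.inf_eq_bot ▸ this)))
  obtain ⟨f₀, hf₀, hf₀L⟩ := L.exists_ne_zero_forall_mem_int_of_discreteTopology
  refine ⟨f₀ ∘ₗ W.projectionOnto V hVW.symm, ?_, fun x hx => hf₀L _ ?_⟩
  · intro h
    refine hf₀ (LinearMap.ext fun w => ?_)
    simpa using LinearMap.congr_fun h w
  · change (W.projectionOnto V hVW.symm x : E) ∈ H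
    rw [Submodule.coe_projectionOnto_apply, Submodule.projection_eq_self_sub_projection hVW]
    exact H.sub_mem (G.le_topologicalClosure hx)
      (AddSubgroup.mem_of_mem_linealitySpace (Submodule.projection_apply_mem hVW x))

end

theorem Complex.exists_forall_eq_re_mul (f : ℂ →ₗ[ℝ] ℝ) : ∃ c : ℂ, ∀ z, f z = (c * z).re := by
  refine ⟨f 1 - f I * I, fun z => ?_⟩
  have hz : z = z.re • (1 : ℂ) + z.im • I := by apply Complex.ext <;> simp
  conv_lhs => rw [hz, map_add, map_smul, map_smul]
  simp only [smul_eq_mul, mul_re, mul_im, sub_re, sub_im, ofReal_re, ofReal_im, I_re, I_im]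
  ring

theorem Complex.exists_ne_zero_forall_re_mul_int_of_not_dense {G : AddSubgroup ℂ}
    (hG : ¬Dense (G : Set ℂ)) : ∃ c ≠ 0, ∀ x ∈ G, ∃ n : ℤ, (c * x).re = n := by
  obtain ⟨f, hf, hfG⟩ := AddSubgroup.exists_ne_zero_forall_mem_int_of_not_dense hG
  obtain ⟨c, hc⟩ := Complex.exists_forall_eq_re_mul f
  refine ⟨c, fun h0 => hf (LinearMap.ext fun z => by simp [hc, h0]), fun x hx => ?_⟩
  simpa only [hc] using hfG x hx

theorem Matrix.det_smul_eq_vecMul_adjugate {n R : Type*} [Fintype n] [DecidableEq n] [CommRing R]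
    (A : Matrix n n R) (x : n → R) : A.det • x = (x ᵥ* A) ᵥ* A.adjugate := by
  rw [vecMul_vecMul, mul_adjugate, vecMul_smul, vecMul_one]

theorem Matrix.map_det_smul_eq_comp_vecMul_adjugate {n R S : Type*} [Fintype n] [DecidableEq n]
    [CommRing R] [CommRing S] (f : R →+* S) (A : Matrix n n R) {x : n → S} {μ : n → R}
    (hx : x ᵥ* A.map f = f ∘ μ) : f A.det • x = f ∘ (μ ᵥ* A.adjugate) := by
  rw [RingHom.map_det, det_smul_eq_vecMul_adjugate, RingHom.mapMatrix_apply, hx,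
    ← RingHom.mapMatrix_apply, ← RingHom.map_adjugate]
  funext k
  exact (f.map_vecMul _ _ k).symm

theorem Matrix.det_ne_zero_of_transpose_mul_mul_eq_diagonal {n R : Type*} [Fintype n]
    [DecidableEq n] [CommRing R] [IsDomain R] {A P : Matrix n n R} {d : n → R}
    (h : Pᵀ * A * P = diagonal d) (hd : ∀ i, d i ≠ 0) : A.det ≠ 0 := by
  have : ∏ i, d i ≠ 0 := Finset.prod_ne_zero_iff.2 fun i _ => hd i
  rw [← det_diagonal, ← h, det_mul, det_mul] at this
  exact right_ne_zero_of_mul (left_ne_zero_of_mul this)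

section

variable {n : Type*} [Fintype n]

theorem sum_sum_mul_conj_eq_zero_of_re_mul_eq_zero {B : Matrix n n ℂ} {t : n → ℂ}
    (hiso : ∑ i, ∑ j, t i * B i j * t j = 0) {c : ℂ} (hc : c ≠ 0)
    (hre : ∀ i, (c * t i).re = 0) : ∑ i, ∑ j, t i * B i j * conj (t j) = 0 := by
  have hconj : ∀ j, conj (t j) = -(c / conj c) * t j := by
    intro j
    have h := congrArg (fun x : ℝ => (x : ℂ)) (hre j)
    simp only [Complex.re_eq_add_conj, map_mul, Complex.ofReal_zero] at h
    have : conj c ≠ 0 := (map_ne_zero _).2 hc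
    field_simp
    linear_combination 2 * h
  calc ∑ i, ∑ j, t i * B i j * conj (t j)
      = -(c / conj c) * ∑ i, ∑ j, t i * B i j * t j := by
        simp only [hconj, Finset.mul_sum]
        exact Finset.sum_congr rfl fun i _ => Finset.sum_congr rfl fun j _ => by ring
    _ = 0 := by rw [hiso, mul_zero]

variable [DecidableEq n]

theorem re_mul_eq_zero_of_forall_re_mul_vecMul_int {B : Matrix n n ℤ} (hB : B.det ≠ 0)
    {t : n → ℂ} (hns : ∀ lam : n → ℤ,
      ((fun i => (lam i : ℂ)) ∈ Submodule.span ℂ {t, fun i => conj (t i)}) → lam = 0)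
    {c : ℂ} (hc : ∀ j, ∃ k : ℤ, (c * (t ᵥ* B.map (↑)) j).re = k) (i : n) :
    (c * t i).re = 0 := by
  choose μ hμ using hc
  set x : n → ℂ := fun i => ((c * t i).re : ℂ)
  have hx : x ᵥ* B.map (Int.castRingHom ℂ) = Int.castRingHom ℂ ∘ μ := by
    funext j
    rw [Function.comp_apply, eq_intCast, ← Complex.ofReal_intCast, ← hμ j]
    simp only [x, vecMul, dotProduct, map_apply, Finset.mul_sum, Complex.re_sum,
      Complex.ofReal_sum, ← mul_assoc]
    refine Finset.sum_congr rfl fun i _ => ?_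
    rw [eq_intCast, ← Complex.ofReal_intCast, Complex.re_mul_ofReal, Complex.ofReal_mul]
  have hx_span : x = (c / 2) • t + (conj c / 2) • fun i => conj (t i) := by
    funext i
    simp only [x, Complex.re_eq_add_conj, map_mul, Pi.add_apply, Pi.smul_apply, smul_eq_mul]
    ring
  have hdetx := map_det_smul_eq_comp_vecMul_adjugate _ _ hx
  have hμ0 : μ ᵥ* B.adjugate = 0 := hns _ <| by
    change Int.castRingHom ℂ ∘ (μ ᵥ* B.adjugate) ∈ _
    rw [← hdetx, hx_span]
    exact Submodule.smul_mem _ _ <| Submodule.add_mem _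
      (Submodule.smul_mem _ _ (Submodule.subset_span (Set.mem_insert _ _)))
      (Submodule.smul_mem _ _ (Submodule.subset_span (Set.mem_insert_of_mem _ rfl)))
  have hxi : (B.det : ℂ) * x i = 0 := by
    simpa [hμ0] using congrFun hdetx i
  exact Complex.ofReal_eq_zero.1 <| (mul_eq_zero.1 hxi).resolve_left (by exact_mod_cast hB)

end

theorem stmt_14_general (m : ℕ)
    (B : Matrix (Fin (m + 2)) (Fin (m + 2)) ℤ)
    (hsig : ∃ P : Matrix (Fin (m + 2)) (Fin (m + 2)) ℝ, IsUnit P.det ∧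
      P.transpose * (B.map (Int.cast : ℤ → ℝ)) * P =
        Matrix.diagonal (fun i : Fin (m + 2) => if (i : ℕ) < 2 then (1 : ℝ) else -1))
    (t : Fin (m + 2) → ℂ)
    (hiso : ∑ i, ∑ j, t i * (B i j : ℂ) * t j = 0)
    (hpos : ∃ r : ℝ, 0 < r ∧
      ∑ i, ∑ j, t i * (B i j : ℂ) * (starRingEnd ℂ) (t j) = (r : ℂ))
    (hns : ∀ lam : Fin (m + 2) → ℤ,
      ((fun i => (lam i : ℂ)) ∈
        Submodule.span ℂ {t, fun i => (starRingEnd ℂ) (t i)}) → lam = 0) :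
    Dense (Set.range fun z : Fin (m + 2) → ℤ =>
      ∑ i, ∑ j, t i * (B i j : ℂ) * (z j : ℂ)) := by
  obtain ⟨P, -, hPBP⟩ := hsig
  have hdet : B.det ≠ 0 := by
    have := det_ne_zero_of_transpose_mul_mul_eq_diagonal hPBP fun i => by split_ifs <;> norm_num
    rwa [show B.map Int.cast = (Int.castRingHom ℝ).mapMatrix B from rfl, ← RingHom.map_det,
      eq_intCast, Int.cast_ne_zero] at this
  let φ : (Fin (m + 2) → ℤ) →+ ℂ :=
    AddMonoidHom.mk' (fun z => ∑ i, ∑ j, t i * (B i j : ℂ) * (z j : ℂ)) fun x y => by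
      simp only [Pi.add_apply, Int.cast_add, mul_add, Finset.sum_add_distrib]
  have hφ_single : ∀ j, φ (Pi.single j 1) = (t ᵥ* B.map (↑)) j := fun j => by
    simp [φ, Pi.single_apply, vecMul, dotProduct]
  change Dense (φ.range : Set ℂ)
  by_contra hdense
  obtain ⟨c, hc, hcφ⟩ := Complex.exists_ne_zero_forall_re_mul_int_of_not_dense hdense
  have hre := re_mul_eq_zero_of_forall_re_mul_vecMul_int hdet hns fun j =>
    hφ_single j ▸ hcφ _ ⟨_, rfl⟩
  obtain ⟨r, hr, hsum⟩ := hpos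
  rw [sum_sum_mul_conj_eq_zero_of_re_mul_eq_zero hiso hc hre] at hsum
  exact hr.ne' (Complex.ofReal_eq_zero.1 hsum.symm)

/-- Let `Q` be a lattice of signature `(2, m)`, `m ≥ 1` (here `ℤ^(m+2)` with an integral
symmetric Gram matrix `B` which diagonalizes over `ℝ` to `diag(1,1,-1,…,-1)`), and let
`ℓ = ℂ·t` be a period: `(t,t) = 0` and `(t,t̄) > 0`.  If `ℓ` is non-special, i.e. the
plane `ℓ ⊕ ℓ̄` contains no nonzero integral vector, then for any nonzero `t ∈ ℓ` the image
of the homomorphism `Q → ℂ`, `z ↦ (t,z)`, is dense in `ℂ`. -/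
theorem stmt_14 (m : ℕ) (hm : 1 ≤ m)
    (B : Matrix (Fin (m + 2)) (Fin (m + 2)) ℤ) (hsymm : B.IsSymm)
    (hsig : ∃ P : Matrix (Fin (m + 2)) (Fin (m + 2)) ℝ, IsUnit P.det ∧
      P.transpose * (B.map (Int.cast : ℤ → ℝ)) * P =
        Matrix.diagonal (fun i : Fin (m + 2) => if (i : ℕ) < 2 then (1 : ℝ) else -1))
    (t : Fin (m + 2) → ℂ) (ht : t ≠ 0)
    (hiso : ∑ i, ∑ j, t i * (B i j : ℂ) * t j = 0)
    (hpos : ∃ r : ℝ, 0 < r ∧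
      ∑ i, ∑ j, t i * (B i j : ℂ) * (starRingEnd ℂ) (t j) = (r : ℂ))
    (hns : ∀ lam : Fin (m + 2) → ℤ,
      ((fun i => (lam i : ℂ)) ∈
        Submodule.span ℂ {t, fun i => (starRingEnd ℂ) (t i)}) → lam = 0) :
    Dense (Set.range fun z : Fin (m + 2) → ℤ =>
      ∑ i, ∑ j, t i * (B i j : ℂ) * (z j : ℂ)) :=
  stmt_14_general m B hsig t hiso hpos hns
end

section
/- Let n ≥ 2 and d ≥ 1 with d² | n-1, and fix b with gcd(b,d)=1 and s with s·b ≡ 1 (mod d). In the Mukai lattice of a K3 surface (H*(S,ℤ) with pairing ((r,c,s),(r',c',s')) = (c,c') - rs' - r's), let v = (0, dλ, s) where λ has (λ,λ) = (2n-2)/d². Then a Mukai vector (r, c, t) is orthogonal to v if and only if r·s = d·(c, λ); and for every such vector, d divides r. Consequently the divisibility of the class (0,0,1) ∈ v^⊥ (i.e. gcd of its pairings with all elements of v^⊥) equals d. -/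
/-!
Orthogonality to `v = (0, dλ, s)` reads `r s = d (c, λ)`, and `s` is a unit modulo `d`, so `d ∣ r`;
since `((0,0,1), (r,c,t)) = -r`, the divisibility of `(0,0,1)` in `v^⊥` is a multiple of `d`.
It is exactly `d` because `λ` is primitive and the lattice unimodular: some `c` has `(c, λ) = -s`,
and then `(-d, c, 0) ∈ v^⊥` pairs to `d` with `(0,0,1)`.
-/

/-- The Mukai pairing on `ℤ ⊕ H² ⊕ ℤ`:
`((r,c,s),(r',c',s')) = (c,c') - r·s' - r'·s`. -/
def mukaiPair {H : Type*} [AddCommGroup H] [Module ℤ H]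
    (B : H →ₗ[ℤ] H →ₗ[ℤ] ℤ) (x y : ℤ × H × ℤ) : ℤ :=
  B x.2.1 y.2.1 - x.1 * y.2.2 - y.1 * x.2.2

theorem Module.Free.exists_dual_eq_one_of_primitive {R M : Type*} [CommRing R]
    [IsPrincipalIdealRing R] [AddCommGroup M] [Module R M] [Module.Free R M] [Module.Finite R M]
    (v : M) (hv : ∀ (k : R) (y : M), v = k • y → IsUnit k) :
    ∃ φ : M →ₗ[R] R, φ v = 1 := by
  classical
  let b := Module.Free.chooseBasis R M
  -- the gcd `g` of the coordinates of `v` divides `v`, hence is a unit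
  obtain ⟨g, hg⟩ := (IsPrincipalIdealRing.principal (Ideal.span (Set.range (b.repr v)))).principal
  replace hg : Ideal.span (Set.range (b.repr v)) = Ideal.span {g} := hg
  have hdvd (i) : g ∣ b.repr v i :=
    Ideal.mem_span_singleton.mp (by rw [← hg]; exact Ideal.subset_span ⟨i, rfl⟩)
  choose q hq using hdvd
  have hg_unit : IsUnit g := by
    refine hv g (∑ i, q i • b i) ?_
    conv_lhs => rw [← b.sum_repr v]
    simp [Finset.smul_sum, hq, mul_smul]
  have hone : (1 : R) ∈ Ideal.span (Set.range (b.repr v)) := by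
    rw [hg]; exact Ideal.mem_span_singleton.mpr hg_unit.dvd
  obtain ⟨c, hc⟩ := (Submodule.mem_span_range_iff_exists_fun R).mp hone
  exact ⟨∑ i, c i • b.coord i, by simpa using hc⟩

theorem exists_apply_eq_of_surjective_of_primitive {R M : Type*} [CommRing R]
    [IsPrincipalIdealRing R] [AddCommGroup M] [Module R M] [Module.Free R M] [Module.Finite R M]
    (B : M →ₗ[R] M →ₗ[R] R) (hB : Function.Surjective (fun x : M => B x))
    (v : M) (hv : ∀ (k : R) (y : M), v = k • y → IsUnit k) (a : R) :
    ∃ c : M, B c v = a := by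
  obtain ⟨φ, hφ⟩ := Module.Free.exists_dual_eq_one_of_primitive v hv
  obtain ⟨c, hc⟩ := hB (a • φ)
  exact ⟨c, by simpa [hφ] using LinearMap.congr_fun hc v⟩

theorem isCoprime_of_dvd_mul_sub_one {R : Type*} [CommRing R] {d s b : R}
    (h : d ∣ s * b - 1) : IsCoprime d s := by
  obtain ⟨k, hk⟩ := h
  exact ⟨-k, b, by linear_combination hk⟩

section mukaiPair

variable {H : Type*} [AddCommGroup H] [Module ℤ H] (B : H →ₗ[ℤ] H →ₗ[ℤ] ℤ)

@[simp]
theorem mukaiPair_zero_smul (r : ℤ) (c : H) (t d : ℤ) (lam : H) (s : ℤ) :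
    mukaiPair B (r, c, t) (0, d • lam, s) = d * B c lam - r * s := by
  simp [mukaiPair]

@[simp]
theorem mukaiPair_zero_zero_one (r : ℤ) (c : H) (t : ℤ) :
    mukaiPair B (0, (0 : H), 1) (r, c, t) = -r := by
  simp [mukaiPair]

theorem mukaiPair_zero_smul_eq_zero_iff (r : ℤ) (c : H) (t d : ℤ) (lam : H) (s : ℤ) :
    mukaiPair B (r, c, t) (0, d • lam, s) = 0 ↔ r * s = d * B c lam := by
  rw [mukaiPair_zero_smul, sub_eq_zero, eq_comm]

end mukaiPair

theorem stmt_16_general (H : Type*) [AddCommGroup H] [Module ℤ H]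
    [Module.Free ℤ H] [Module.Finite ℤ H]
    (B : H →ₗ[ℤ] H →ₗ[ℤ] ℤ)
    (hunimod : Function.Bijective (fun x : H => B x))
    (d b s : ℤ)
    (hsb : d ∣ s * b - 1)
    (lam : H) (hlamprim : ∀ (k : ℤ) (y : H), lam = k • y → IsUnit k) :
    (∀ (r : ℤ) (c : H) (t : ℤ),
        mukaiPair B (r, c, t) (0, d • lam, s) = 0 ↔ r * s = d * B c lam) ∧
    (∀ (r : ℤ) (c : H) (t : ℤ),
        mukaiPair B (r, c, t) (0, d • lam, s) = 0 → d ∣ r) ∧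
    (∀ (r : ℤ) (c : H) (t : ℤ),
        mukaiPair B (r, c, t) (0, d • lam, s) = 0 →
          d ∣ mukaiPair B (0, (0 : H), 1) (r, c, t)) ∧
    (∃ (r : ℤ) (c : H) (t : ℤ),
        mukaiPair B (r, c, t) (0, d • lam, s) = 0 ∧
        mukaiPair B (0, (0 : H), 1) (r, c, t) = d) := by
  have horth := mukaiPair_zero_smul_eq_zero_iff B (d := d) (lam := lam) (s := s)
  have hdr (r : ℤ) (c : H) (t : ℤ) (h : mukaiPair B (r, c, t) (0, d • lam, s) = 0) : d ∣ r :=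
    (isCoprime_of_dvd_mul_sub_one hsb).dvd_of_dvd_mul_right ⟨B c lam, (horth r c t).mp h⟩
  refine ⟨horth, hdr, fun r c t h => by simpa using hdr r c t h, ?_⟩
  -- `hlamprim` uses the `ℤ`-action of the additive group, not the one of `Module ℤ H`
  obtain ⟨c, hc⟩ := exists_apply_eq_of_surjective_of_primitive B hunimod.2 lam
    (fun k y h => hlamprim k y (h.trans (int_smul_eq_zsmul _ k y))) (-s)
  exact ⟨-d, c, 0, by simp [hc], by simp⟩

/-- Let `n ≥ 2`, `d ≥ 1` with `d² ∣ n-1`, `gcd(b,d) = 1` and `s·b ≡ 1 (mod d)`.  In the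
Mukai lattice of a K3 surface, with `v = (0, d•λ, s)` and `(λ,λ) = (2n-2)/d²`, a Mukai
vector `(r,c,t)` is orthogonal to `v` iff `r·s = d·(c,λ)`; for every such vector `d ∣ r`;
and consequently the divisibility of `(0,0,1) ∈ v^⊥` equals `d`. -/
theorem stmt_16 (H : Type*) [AddCommGroup H] [Module ℤ H]
    [Module.Free ℤ H] [Module.Finite ℤ H]
    (B : H →ₗ[ℤ] H →ₗ[ℤ] ℤ) (hsymm : ∀ x y, B x y = B y x)
    (hunimod : Function.Bijective (fun x : H => B x))
    (n d b s : ℤ) (hn : 2 ≤ n) (hd : 1 ≤ d) (hdvd : d ^ 2 ∣ n - 1)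
    (hbd : IsCoprime b d) (hsb : d ∣ s * b - 1)
    (lam : H) (hlamprim : ∀ (k : ℤ) (y : H), lam = k • y → IsUnit k)
    (hlam : B lam lam = 2 * (n - 1) / d ^ 2) :
    (∀ (r : ℤ) (c : H) (t : ℤ),
        mukaiPair B (r, c, t) (0, d • lam, s) = 0 ↔ r * s = d * B c lam) ∧
    (∀ (r : ℤ) (c : H) (t : ℤ),
        mukaiPair B (r, c, t) (0, d • lam, s) = 0 → d ∣ r) ∧
    (∀ (r : ℤ) (c : H) (t : ℤ),
        mukaiPair B (r, c, t) (0, d • lam, s) = 0 →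
          d ∣ mukaiPair B (0, (0 : H), 1) (r, c, t)) ∧
    (∃ (r : ℤ) (c : H) (t : ℤ),
        mukaiPair B (r, c, t) (0, d • lam, s) = 0 ∧
        mukaiPair B (0, (0 : H), 1) (r, c, t) = d) :=
  stmt_16_general H B hunimod d b s hsb lam hlamprim
end
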